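/- For all n ≥ 0, j ≥ 1, and all complex x, ∑_{k=0}^{n} C(n,k) L_{jk} (±√5 F_j)^{n-k} E_{n-k}(x) = 2^{1-n} (L_j ± √5 F_j (2x-1))^n (both sign choices), where E_m(x) are Euler polynomials. -/

import Mathlib

def lucas : ℕ → ℕ
  | 0 => 2
  | 1 => 1
  | n + 2 => lucas (n + 1) + lucas n

noncomputable def eulerPoly : ℕ → Polynomial ℚ
  | n => Polynomial.X ^ n - Polynomial.C (1/2 : ℚ) *
      ∑ k : Fin n, (n.choose k : ℚ) • eulerPoly k

noncomputable def eulerNumber (n : ℕ) : ℚ := 2 ^ n * (eulerPoly n).eval (1/2)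

open Polynomial Finset

lemma eulerPoly_def (n : ℕ) : eulerPoly n = X ^ n - C (1/2 : ℚ) *
    ∑ k ∈ range n, (n.choose k : ℚ) • eulerPoly k := by
  rw [eulerPoly, Fin.sum_univ_eq_sum_range (fun k => (n.choose k : ℚ) • eulerPoly k)]

lemma natDegree_eulerPoly (n : ℕ) : (eulerPoly n).natDegree ≤ n := by
  induction n using Nat.strong_induction_on with
  | _ n ih =>
    rw [eulerPoly_def]
    refine le_trans (natDegree_sub_le _ _) ?_
    simp only [natDegree_pow, natDegree_X, mul_one, max_le_iff]
    constructor
    · simp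
    · refine le_trans (natDegree_mul_le) ?_
      simp only [natDegree_C, zero_add]
      refine le_trans (natDegree_sum_le _ _) ?_
      simp only [Finset.fold_max_le]
      refine ⟨Nat.zero_le _, ?_⟩
      intro k hk
      refine le_trans (natDegree_smul_le _ _) (le_trans (ih k (mem_range.mp hk)) ?_)
      exact le_of_lt (mem_range.mp hk) |>.trans (le_refl n) |>.trans (le_refl n)

lemma derivative_eulerPoly (n : ℕ) :
    (eulerPoly n).derivative = (n : ℚ) • eulerPoly (n - 1) := by
  induction n using Nat.strong_induction_on with
  | _ n ih =>
    match n with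
    | 0 => rw [eulerPoly_def]; simp
    | (m+1) =>
      rw [eulerPoly_def, derivative_sub, derivative_mul, derivative_C, zero_mul, zero_add,
        derivative_pow, derivative_X, mul_one, derivative_sum]
      have h1 : ∀ k ∈ range (m+1), derivative (((m+1).choose k : ℚ) • eulerPoly k)
          = (((m+1).choose k : ℚ) * k) • eulerPoly (k-1) := by
        intro k hk
        rw [derivative_smul, ih k (mem_range.mp hk), smul_smul]
      rw [sum_congr rfl h1]
      have h2 : ∑ k ∈ range (m+1), ((((m+1).choose k : ℚ) * k) • eulerPoly (k-1))
          = ∑ k ∈ range m, (((m : ℚ)+1) * (m.choose k : ℚ)) • eulerPoly k := by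
        rw [Finset.sum_range_succ']
        simp only [Nat.cast_zero, mul_zero, zero_smul, add_zero]
        refine sum_congr rfl ?_
        intro k hk
        congr 1
        exact_mod_cast congrArg (Nat.cast (R := ℚ)) (Nat.add_one_mul_choose_eq m k).symm
      rw [h2, Nat.add_sub_cancel, eulerPoly_def m, smul_sub, ← mul_smul_comm,
        Finset.smul_sum]
      congr 1
      · rw [Polynomial.smul_eq_C_mul]
      · congr 1
        refine sum_congr rfl fun k _ => ?_
        rw [smul_smul]
        norm_cast

lemma hasseDeriv_eulerPoly (k n : ℕ) :
    hasseDeriv k (eulerPoly n) = (n.choose k : ℚ) • eulerPoly (n - k) := by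
  induction k with
  | zero => simp [hasseDeriv_zero']
  | succ k ih =>
    have h : derivative (hasseDeriv k (eulerPoly n))
        = ((k+1 : ℕ) : ℚ) • hasseDeriv (k+1) (eulerPoly n) := by
      have h0 := LinearMap.congr_fun (hasseDeriv_comp (R := ℚ) 1 k) (eulerPoly n)
      simp only [LinearMap.comp_apply, hasseDeriv_one', Nat.choose_one_right,
        LinearMap.smul_apply] at h0
      rw [h0, Nat.cast_smul_eq_nsmul]
      norm_num [add_comm 1 k]
    rw [ih, derivative_smul, derivative_eulerPoly] at h
    have hk : ((k+1 : ℕ) : ℚ) ≠ 0 := by positivity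
    have h2 := congrArg (fun p => ((k+1 : ℕ) : ℚ)⁻¹ • p) h
    simp only [smul_smul, inv_mul_cancel₀ hk, one_smul] at h2
    rw [← h2, Nat.sub_sub]
    congr 1
    have h3 : ((n.choose (k+1) : ℚ)) * ((k+1 : ℕ) : ℚ) = (n.choose k : ℚ) * ((n - k : ℕ) : ℚ) := by
      exact_mod_cast congrArg (Nat.cast (R := ℚ)) (Nat.choose_succ_right_eq n k)
    field_simp
    push_cast at h3 ⊢
    linarith [h3]

lemma hasseDeriv_map' (k : ℕ) (f : Polynomial ℚ) :
    hasseDeriv k (f.map (algebraMap ℚ ℂ)) = (hasseDeriv k f).map (algebraMap ℚ ℂ) := by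
  ext n
  simp [hasseDeriv_coeff, coeff_map]

lemma eulerPoly_translate (n : ℕ) (u v : ℂ) :
    (Polynomial.aeval (u + v)) (eulerPoly n)
      = ∑ k ∈ range (n+1), (n.choose k : ℂ) * (Polynomial.aeval u) (eulerPoly (n-k)) * v ^ k := by
  have haev : ∀ (w : ℂ) (p : Polynomial ℚ),
      (Polynomial.aeval w) p = (p.map (algebraMap ℚ ℂ)).eval w := by
    intro w p
    rw [aeval_def, eval_map]
  rw [haev]
  set P := (eulerPoly n).map (algebraMap ℚ ℂ) with hP
  have hdeg : (taylor u P).natDegree < n + 1 := by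
    rw [natDegree_taylor]
    exact Nat.lt_succ_of_le (le_trans (natDegree_map_le) (natDegree_eulerPoly n))
  have h1 : P.eval (u + v) = (taylor u P).eval v := by
    rw [taylor_eval, add_comm]
  rw [h1, eval_eq_sum_range' hdeg]
  refine sum_congr rfl fun k _ => ?_
  rw [taylor_coeff, hP, hasseDeriv_map', hasseDeriv_eulerPoly, Polynomial.smul_eq_C_mul,
    Polynomial.map_mul, map_C, eval_mul, eval_C, haev]
  push_cast
  ring

lemma aeval_eulerPoly_def (n : ℕ) (u : ℂ) :
    (Polynomial.aeval u) (eulerPoly n)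
      = u ^ n - (1/2 : ℂ) * ∑ k ∈ range n, (n.choose k : ℂ) * (Polynomial.aeval u) (eulerPoly k) := by
  conv_lhs => rw [eulerPoly_def]
  rw [map_sub, map_pow, aeval_X, map_mul, aeval_C, map_sum]
  have hs : ∑ k ∈ range n, (Polynomial.aeval u) (((n.choose k : ℚ)) • eulerPoly k)
      = ∑ k ∈ range n, (n.choose k : ℂ) * (Polynomial.aeval u) (eulerPoly k) :=
    sum_congr rfl fun k _ => by rw [map_smul, Rat.smul_def]; push_cast; ring
  rw [hs]
  norm_num

lemma eulerPoly_reflect (n : ℕ) (u : ℂ) :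
    (Polynomial.aeval (u+1)) (eulerPoly n) + (Polynomial.aeval u) (eulerPoly n)
      = 2 * u ^ n := by
  have ht := eulerPoly_translate n u 1
  simp only [one_pow, mul_one] at ht
  have hrev : ∑ k ∈ range (n+1), (n.choose k : ℂ) * (Polynomial.aeval u) (eulerPoly (n-k))
      = ∑ k ∈ range (n+1), (n.choose k : ℂ) * (Polynomial.aeval u) (eulerPoly k) := by
    rw [← Finset.sum_range_reflect (fun k => (n.choose k : ℂ) * (Polynomial.aeval u) (eulerPoly k)) (n+1)]
    refine sum_congr rfl fun k hk => ?_
    have hk' : k ≤ n := Nat.lt_succ_iff.mp (mem_range.mp hk)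
    simp only [Nat.add_sub_cancel]
    rw [Nat.choose_symm hk']
  rw [hrev, sum_range_succ, Nat.choose_self] at ht
  have hd := aeval_eulerPoly_def n u
  rw [ht]
  push_cast
  linear_combination 2 * hd

noncomputable def phiC : ℂ := (1 + (Real.sqrt 5 : ℂ)) / 2
noncomputable def psiC : ℂ := (1 - (Real.sqrt 5 : ℂ)) / 2

lemma sqrt5_sq : ((Real.sqrt 5 : ℝ) : ℂ)^2 = 5 := by
  have : (Real.sqrt 5) ^ 2 = 5 := Real.sq_sqrt (by norm_num)
  calc ((Real.sqrt 5 : ℝ) : ℂ)^2 = (((Real.sqrt 5) ^ 2 : ℝ) : ℂ) := by push_cast; ring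
  _ = 5 := by rw [this]; norm_num

lemma phiC_sq : phiC ^ 2 = phiC + 1 := by
  rw [phiC]; linear_combination sqrt5_sq / 4

lemma psiC_sq : psiC ^ 2 = psiC + 1 := by
  rw [psiC]; linear_combination sqrt5_sq / 4

lemma lucas_binet (m : ℕ) : (lucas m : ℂ) = phiC ^ m + psiC ^ m := by
  induction m using Nat.twoStepInduction with
  | zero => rw [lucas]; norm_num
  | one => simp [lucas, phiC, psiC]; ring
  | more m ih1 ih2 =>
    rw [lucas, Nat.cast_add, ih1, ih2]
    have h1 : phiC ^ (m + 2) = phiC ^ (m+1) + phiC ^ m := by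
      calc phiC ^ (m+2) = phiC ^ m * phiC ^ 2 := by ring
      _ = phiC ^ m * (phiC + 1) := by rw [phiC_sq]
      _ = phiC ^ (m+1) + phiC ^ m := by ring
    have h2 : psiC ^ (m + 2) = psiC ^ (m+1) + psiC ^ m := by
      calc psiC ^ (m+2) = psiC ^ m * psiC ^ 2 := by ring
      _ = psiC ^ m * (psiC + 1) := by rw [psiC_sq]
      _ = psiC ^ (m+1) + psiC ^ m := by ring
    rw [h1, h2]; ring

lemma fib_binet (m : ℕ) : (Nat.fib m : ℂ) * (Real.sqrt 5 : ℂ) = phiC ^ m - psiC ^ m := by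
  induction m using Nat.twoStepInduction with
  | zero => simp
  | one => simp [phiC, psiC]; ring
  | more m ih1 ih2 =>
    rw [Nat.fib_add_two, Nat.cast_add, add_mul, ih1, ih2]
    have h1 : phiC ^ (m + 2) = phiC ^ (m+1) + phiC ^ m := by
      calc phiC ^ (m+2) = phiC ^ m * phiC ^ 2 := by ring
      _ = phiC ^ m * (phiC + 1) := by rw [phiC_sq]
      _ = phiC ^ (m+1) + phiC ^ m := by ring
    have h2 : psiC ^ (m + 2) = psiC ^ (m+1) + psiC ^ m := by
      calc psiC ^ (m+2) = psiC ^ m * psiC ^ 2 := by ring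
      _ = psiC ^ m * (psiC + 1) := by rw [psiC_sq]
      _ = psiC ^ (m+1) + psiC ^ m := by ring
    rw [h1, h2]; ring

lemma sum_formula (n : ℕ) (x a c : ℂ) (ha : a ≠ 0) :
    ∑ k ∈ range (n+1), (n.choose k : ℂ) * c ^ k * a ^ (n-k) * (Polynomial.aeval x) (eulerPoly (n-k))
      = a ^ n * (Polynomial.aeval (x + c/a)) (eulerPoly n) := by
  rw [eulerPoly_translate n x (c/a), Finset.mul_sum]
  refine sum_congr rfl fun k hk => ?_
  have hk' : k ≤ n := Nat.lt_succ_iff.mp (mem_range.mp hk)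
  have hpow : a ^ (n-k) * a ^ k = a ^ n := by rw [← pow_add, Nat.sub_add_cancel hk']
  rw [div_pow, ← hpow]
  have hak : a ^ k ≠ 0 := pow_ne_zero _ ha
  field_simp

lemma both_formula (n : ℕ) (x a b c : ℂ) (ha : a ≠ 0) (hbc : b - c = a) :
    ∑ k ∈ range (n+1), (n.choose k : ℂ) * (b^k + c^k) * a^(n-k) *
      (Polynomial.aeval x) (eulerPoly (n-k)) = 2 * (a*x + c)^n := by
  have hsplit : ∀ k ∈ range (n+1), (n.choose k : ℂ) * (b^k + c^k) * a^(n-k) *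
      (Polynomial.aeval x) (eulerPoly (n-k))
      = (n.choose k : ℂ) * b^k * a^(n-k) * (Polynomial.aeval x) (eulerPoly (n-k))
        + (n.choose k : ℂ) * c^k * a^(n-k) * (Polynomial.aeval x) (eulerPoly (n-k)) := by
    intro k _; ring
  rw [sum_congr rfl hsplit, Finset.sum_add_distrib, sum_formula n x a b ha,
    sum_formula n x a c ha]
  have hu : x + b/a = (x + c/a) + 1 := by
    field_simp
    linear_combination hbc
  rw [hu, ← mul_add, eulerPoly_reflect n (x + c/a)]
  have : a * (x + c/a) = a*x + c := by field_simp
  calc a^n * (2 * (x + c/a)^n) = 2 * (a * (x + c/a))^n := by rw [mul_pow]; ring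
  _ = 2 * (a*x + c)^n := by rw [this]

lemma two_zpow_helper (n : ℕ) (y : ℂ) :
    (2:ℂ) ^ ((1:ℤ) - n) * (2 * y) ^ n = 2 * y ^ n := by
  rw [mul_pow]
  calc (2:ℂ) ^ ((1:ℤ) - n) * ((2:ℂ)^n * y^n)
      = ((2:ℂ) ^ ((1:ℤ) - n) * (2:ℂ)^(n:ℤ)) * y^n := by rw [zpow_natCast]; ring
  _ = 2 * y^n := by
      rw [← zpow_add₀ (two_ne_zero) ((1:ℤ) - n) (n:ℤ)]
      norm_num

theorem stmt18 (n j : ℕ) (hj : 1 ≤ j) (x : ℂ) (ε : ℂ) (hε : ε = 1 ∨ ε = -1) :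
    ∑ k ∈ Finset.range (n + 1), (n.choose k : ℂ) * (lucas (j * k) : ℂ) *
      (ε * (Real.sqrt 5 : ℂ) * (Nat.fib j : ℂ)) ^ (n - k) *
      Polynomial.aeval x (eulerPoly (n - k))
      = (2 : ℂ) ^ ((1 : ℤ) - n) *
        ((lucas j : ℂ) + ε * (Real.sqrt 5 : ℂ) * (Nat.fib j : ℂ) * (2 * x - 1)) ^ n := by
  have hs5 : ((Real.sqrt 5 : ℝ) : ℂ) ≠ 0 := by
    simp only [ne_eq, Complex.ofReal_eq_zero]
    exact (Real.sqrt_pos.mpr (by norm_num)).ne'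
  have hfib : (Nat.fib j : ℂ) ≠ 0 := Nat.cast_ne_zero.mpr (Nat.fib_pos.mpr hj).ne'
  have hεne : ε ≠ 0 := by rcases hε with h|h <;> simp [h]
  set a : ℂ := ε * (Real.sqrt 5 : ℂ) * (Nat.fib j : ℂ) with hadef
  have ha : a ≠ 0 := mul_ne_zero (mul_ne_zero hεne hs5) hfib
  have hfb := fib_binet j
  rcases hε with h1 | h1
  · have hbc : phiC^j - psiC^j = a := by rw [hadef, h1]; linear_combination -hfb
    have hL : ∀ k, ((lucas (j*k) : ℂ)) = (phiC^j)^k + (psiC^j)^k := fun k => by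
      rw [lucas_binet, ← pow_mul, ← pow_mul]
    have hsum : ∑ k ∈ Finset.range (n + 1), (n.choose k : ℂ) * (lucas (j * k) : ℂ) *
          a ^ (n - k) * (Polynomial.aeval x) (eulerPoly (n - k))
        = ∑ k ∈ Finset.range (n+1), (n.choose k : ℂ) * ((phiC^j)^k + (psiC^j)^k) *
          a^(n-k) * (Polynomial.aeval x) (eulerPoly (n-k)) :=
      sum_congr rfl fun k _ => by rw [hL k]
    rw [hsum, both_formula n x a _ _ ha hbc, lucas_binet]
    have hre : (phiC^j + psiC^j) + a * (2*x - 1) = 2 * (a*x + psiC^j) := by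
      rw [← hbc]; ring
    rw [hre, two_zpow_helper]
  · have hbc : psiC^j - phiC^j = a := by rw [hadef, h1]; linear_combination hfb
    have hL : ∀ k, ((lucas (j*k) : ℂ)) = (psiC^j)^k + (phiC^j)^k := fun k => by
      rw [lucas_binet, ← pow_mul, ← pow_mul, add_comm]
    have hsum : ∑ k ∈ Finset.range (n + 1), (n.choose k : ℂ) * (lucas (j * k) : ℂ) *
          a ^ (n - k) * (Polynomial.aeval x) (eulerPoly (n - k))
        = ∑ k ∈ Finset.range (n+1), (n.choose k : ℂ) * ((psiC^j)^k + (phiC^j)^k) *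
          a^(n-k) * (Polynomial.aeval x) (eulerPoly (n-k)) :=
      sum_congr rfl fun k _ => by rw [hL k]
    rw [hsum, both_formula n x a _ _ ha hbc, lucas_binet]
    have hre : (phiC^j + psiC^j) + a * (2*x - 1) = 2 * (a*x + phiC^j) := by
      rw [← hbc]; ring
    rw [hre, two_zpow_helper]
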